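/- Let k ≥ 0 and fix a sign choice. If M lies in the real linear span of the lattice functions m ↦ (mh)_∓^{(α)} a with |α| = k and a ∈ Cl_{0,n}, and satisfies D_h^± M = 0 (M is a discrete monogenic homogeneous polynomial of degree k), then Γ_h^± M = −k·M. -/

import Mathlib

open Finset

noncomputable section

/-- The quadratic form on `ℝⁿ` whose Clifford algebra is `Cl_{0,n}`:
`Q(x) = −(x₁² + ⋯ + xₙ²)`, so that the generators satisfy `eᵢeⱼ + eⱼeᵢ = −2δᵢⱼ`. -/
def negQ (n : ℕ) : QuadraticForm ℝ (Fin n → ℝ) :=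
  QuadraticMap.weightedSumSquares ℝ (fun _ : Fin n => (-1 : ℝ))

/-- The Clifford algebra `Cl_{0,n}`. -/
abbrev Cl (n : ℕ) := CliffordAlgebra (negQ n)

/-- The generators `e i` of `Cl_{0,n}`. -/
def eCl (n : ℕ) (i : Fin n) : Cl n := CliffordAlgebra.ι (negQ n) (Pi.single i 1)

/-- `1` for the forward (upper sign) choice, `-1` for the backward one. -/
def sgn (σ : Bool) : ℝ := if σ then 1 else -1

/-- Forward/backward difference `∂_h^{±i}` of a lattice function with values in a real module. -/
def fdiff {n : ℕ} {A : Type*} [AddCommGroup A] [Module ℝ A] (σ : Bool) (h : ℝ) (i : Fin n)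
    (f : (Fin n → ℤ) → A) : (Fin n → ℤ) → A := fun m =>
  if σ then h⁻¹ • (f (m + Pi.single i 1) - f m) else h⁻¹ • (f m - f (m - Pi.single i 1))

/-- `m ∓ εᵢ` (upper sign paired with the forward difference). -/
def shiftB {n : ℕ} (σ : Bool) (i : Fin n) (m : Fin n → ℤ) : Fin n → ℤ :=
  if σ then m - Pi.single i 1 else m + Pi.single i 1

/-- One-dimensional factorial power `(x)_∓^{(s)} = ∏_{k=0}^{s-1} (x ∓ k h)`
(upper sign paired with the forward difference `σ = true`). -/
def factPow (σ : Bool) (h x : ℝ) (s : ℕ) : ℝ :=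
  ∏ k ∈ range s, (x - sgn σ * k * h)

/-- Multi-index factorial power `(mh)_∓^{(α)}`. -/
def mfp {n : ℕ} (σ : Bool) (h : ℝ) (m : Fin n → ℤ) (α : Fin n → ℕ) : ℝ :=
  ∏ i, factPow σ h (m i * h) (α i)

/-- The difference Dirac operator `D_h^± = Σᵢ eᵢ ∂_h^{±i}`. -/
def Dirac (n : ℕ) (σ : Bool) (h : ℝ) (f : (Fin n → ℤ) → Cl n) : (Fin n → ℤ) → Cl n :=
  fun m => ∑ i, eCl n i * fdiff σ h i f m

/-- The Clifford vector `mh = Σᵢ (mᵢ h) eᵢ`. -/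
def vecCl (n : ℕ) (h : ℝ) (m : Fin n → ℤ) : Cl n := ∑ i, ((m i : ℝ) * h) • eCl n i

/-- The difference Euler operator `(E_h^± f)(m) = Σᵢ (mᵢ h) (∂_h^{±i} f)(m ∓ εᵢ)`. -/
def Euler (n : ℕ) (σ : Bool) (h : ℝ) (f : (Fin n → ℤ) → Cl n) : (Fin n → ℤ) → Cl n :=
  fun m => ∑ i, ((m i : ℝ) * h) • fdiff σ h i f (shiftB σ i m)

/-- The second-order operator `(A_h^± f)(m) = ∓ h Σᵢ (mᵢ h) (∂_h^{±i} ∂_h^{∓i} f)(m)`. -/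
def Aop (n : ℕ) (σ : Bool) (h : ℝ) (f : (Fin n → ℤ) → Cl n) : (Fin n → ℤ) → Cl n :=
  fun m => (-(sgn σ) * h) • ∑ i, ((m i : ℝ) * h) • fdiff σ h i (fdiff (!σ) h i f) m

/-- `L_{jk}^± f = (mⱼ h) ∂_h^{±k} f − (m_k h) ∂_h^{±j} f`. -/
def Lop (n : ℕ) (σ : Bool) (h : ℝ) (j k : Fin n) (f : (Fin n → ℤ) → Cl n) :
    (Fin n → ℤ) → Cl n :=
  fun m => ((m j : ℝ) * h) • fdiff σ h k f m - ((m k : ℝ) * h) • fdiff σ h j f m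

/-- The difference Gamma operator `Γ_h^± f = −Σ_{j<k} eⱼ e_k L_{jk}^± f − A_h^± f`. -/
def Gamma (n : ℕ) (σ : Bool) (h : ℝ) (f : (Fin n → ℤ) → Cl n) : (Fin n → ℤ) → Cl n :=
  fun m => -(∑ j, ∑ k, if j < k then eCl n j * eCl n k * Lop n σ h j k f m else 0)
    - Aop n σ h f m

/-- `B_h^± = ±h Σᵢ ∂_h^{±i}`. -/
def Bop (n : ℕ) (σ : Bool) (h : ℝ) (f : (Fin n → ℤ) → Cl n) : (Fin n → ℤ) → Cl n :=
  fun m => (sgn σ * h) • ∑ i, fdiff σ h i f m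

/-- `(C_h^± f)(m) = Σᵢ (mᵢ h) eᵢ f(m ∓ εᵢ)`. -/
def Cop (n : ℕ) (σ : Bool) (h : ℝ) (f : (Fin n → ℤ) → Cl n) : (Fin n → ℤ) → Cl n :=
  fun m => ∑ i, ((m i : ℝ) * h) • (eCl n i * f (shiftB σ i m))

/-- `V_{h,r}^± = r I + E_h^± − A_h^± + (1/2) B_h^±`. -/
def Vop (n : ℕ) (σ : Bool) (h r : ℝ) (f : (Fin n → ℤ) → Cl n) : (Fin n → ℤ) → Cl n :=
  fun m => r • f m + Euler n σ h f m - Aop n σ h f m + (1/2 : ℝ) • Bop n σ h f m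

/-- `Π_k^±`: the real span of the lattice functions `m ↦ (mh)_∓^{(α)} a` with `|α| ≤ k`. -/
def PiLe (n : ℕ) (σ : Bool) (h : ℝ) (k : ℕ) : Submodule ℝ ((Fin n → ℤ) → Cl n) :=
  Submodule.span ℝ {f | ∃ (α : Fin n → ℕ) (a : Cl n),
    (∑ i, α i) ≤ k ∧ f = fun m => mfp σ h m α • a}

/-- The space of homogeneous discrete polynomials of degree exactly `k`:
the real span of the lattice functions `m ↦ (mh)_∓^{(α)} a` with `|α| = k`. -/
def PiEq (n : ℕ) (σ : Bool) (h : ℝ) (k : ℕ) : Submodule ℝ ((Fin n → ℤ) → Cl n) :=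
  Submodule.span ℝ {f | ∃ (α : Fin n → ℕ) (a : Cl n),
    (∑ i, α i) = k ∧ f = fun m => mfp σ h m α • a}

/-!
Expanding `Σ_{j<k} eⱼ e_k L_{jk}^±` with the Clifford relations gives
`Γ_h^± f = −(mh) D_h^± f − E_h^± f`, where the `A_h^±` term is exactly what appears when the
shifted argument `m ∓ εᵢ` in the difference Euler operator `E_h^±` is moved back to `m`.
Factorial powers satisfy `x ((x)_∓^{(s)} − (x ∓ h)_∓^{(s)}) = ± s h (x)_∓^{(s)}`, so every
`m ↦ (mh)_∓^{(α)} a` is an eigenfunction of `E_h^±` with eigenvalue `|α|`. Hence `E_h^± M = k M`,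
and `D_h^± M = 0` kills the other term.
-/

lemma eCl_mul_self {n : ℕ} (i : Fin n) : eCl n i * eCl n i = -1 := by
  have hQ : negQ n (Pi.single i 1) = -1 := by
    simp [negQ, QuadraticMap.weightedSumSquares_apply, Pi.single_apply]
  rw [eCl, CliffordAlgebra.ι_sq_scalar, hQ, map_neg, map_one]

lemma eCl_mul_eCl_of_ne {n : ℕ} {i j : Fin n} (hij : i ≠ j) :
    eCl n i * eCl n j = -(eCl n j * eCl n i) := by
  refine eq_neg_of_add_eq_zero_left (CliffordAlgebra.ι_mul_ι_add_swap_of_isOrtho ?_)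
  simp [QuadraticMap.IsOrtho, negQ, QuadraticMap.weightedSumSquares_apply, Pi.single_apply,
    mul_add, Finset.sum_add_distrib, hij, hij.symm]

lemma Finset.sum_sum_eq_sum_sum_lt_add_sum_diag {ι M : Type*} [Fintype ι] [LinearOrder ι]
    [AddCommMonoid M] (g : ι → ι → M) :
    ∑ i, ∑ j, g i j = ∑ i, ∑ j, (if i < j then g i j + g j i else 0) + ∑ i, g i i := by
  have hsplit : ∀ i j, g i j = (if i < j then g i j else 0) + (if j < i then g i j else 0)
      + (if i = j then g i j else 0) := by
    intro i j
    rcases lt_trichotomy i j with hij | rfl | hij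
    · simp [hij, hij.ne, hij.not_gt]
    · simp
    · simp [hij, hij.ne', hij.not_gt]
  conv_lhs => enter [2, i, 2, j]; rw [hsplit]
  simp only [Finset.sum_add_distrib, Finset.sum_ite_eq, Finset.mem_univ, if_true, ite_add_zero]
  rw [Finset.sum_comm (f := fun i j => if j < i then g i j else 0)]

lemma sum_lt_eCl_mul_eCl_mul {n : ℕ} (x : Fin n → ℝ) (F : Fin n → Cl n) :
    ∑ j, ∑ k, (if j < k then eCl n j * eCl n k * (x j • F k - x k • F j) else 0)
      = (∑ j, x j • eCl n j) * (∑ k, eCl n k * F k) + ∑ j, x j • F j := by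
  set g : Fin n → Fin n → Cl n := fun j k => x j • (eCl n j * (eCl n k * F k))
  have hpair : ∀ j k, j < k → eCl n j * eCl n k * (x j • F k - x k • F j) = g j k + g k j := by
    intro j k hjk
    simp only [g, mul_sub, mul_smul_comm, ← mul_assoc, eCl_mul_eCl_of_ne hjk.ne, neg_mul,
      smul_neg, sub_neg_eq_add]
  have hdiag : ∀ j, g j j = -(x j • F j) := by
    intro j
    simp only [g, ← mul_assoc, eCl_mul_self, neg_one_mul, smul_neg]
  have hprod : (∑ j, x j • eCl n j) * (∑ k, eCl n k * F k) = ∑ j, ∑ k, g j k := by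
    simp only [g, Finset.sum_mul_sum, smul_mul_assoc]
  rw [hprod, Finset.sum_sum_eq_sum_sum_lt_add_sum_diag g]
  simp only [hdiag, Finset.sum_neg_distrib, neg_add_cancel_right]
  refine Finset.sum_congr rfl fun j _ => Finset.sum_congr rfl fun k _ => ?_
  split_ifs with hjk
  exacts [hpair j k hjk, rfl]

section Differences

variable {n : ℕ} {A : Type*} [AddCommGroup A] [Module ℝ A] {σ : Bool} {h : ℝ}

lemma fdiff_add (i : Fin n) (f g : (Fin n → ℤ) → A) :
    fdiff σ h i (f + g) = fdiff σ h i f + fdiff σ h i g := by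
  funext m; cases σ <;> simp only [fdiff, Pi.add_apply, Bool.false_eq_true, ↓reduceIte] <;> module

lemma fdiff_smul (i : Fin n) (c : ℝ) (f : (Fin n → ℤ) → A) :
    fdiff σ h i (c • f) = c • fdiff σ h i f := by
  funext m; cases σ <;> simp only [fdiff, Pi.smul_apply, Bool.false_eq_true, ↓reduceIte] <;> module

lemma fdiff_comm (τ : Bool) (i : Fin n) (f : (Fin n → ℤ) → A) :
    fdiff σ h i (fdiff τ h i f) = fdiff τ h i (fdiff σ h i f) := by
  funext m
  cases σ <;> cases τ <;>
    simp only [fdiff, Bool.false_eq_true, ↓reduceIte, sub_add_cancel, add_sub_cancel_right]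

lemma fdiff_shiftB (i : Fin n) (f : (Fin n → ℤ) → A) (m : Fin n → ℤ) :
    fdiff σ h i f (shiftB σ i m) = (sgn σ * h⁻¹) • (f m - f (shiftB σ i m)) := by
  cases σ <;> simp [fdiff, shiftB, sgn, ← smul_neg]

lemma apply_shiftB (hh : h ≠ 0) (i : Fin n) (f : (Fin n → ℤ) → A) (m : Fin n → ℤ) :
    f (shiftB σ i m) = f m - (sgn σ * h) • fdiff (!σ) h i f m := by
  cases σ <;> simp [fdiff, shiftB, sgn, smul_smul, hh]

end Differences

section Operators

variable {n : ℕ} {σ : Bool} {h : ℝ}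

lemma euler_apply (hh : h ≠ 0) (f : (Fin n → ℤ) → Cl n) (m : Fin n → ℤ) :
    Euler n σ h f m = ∑ i, ((m i : ℝ) * h) • fdiff σ h i f m + Aop n σ h f m := by
  rw [Euler, Aop, Finset.smul_sum, ← Finset.sum_add_distrib]
  refine Finset.sum_congr rfl fun i _ => ?_
  rw [apply_shiftB hh i (fdiff σ h i f), fdiff_comm (!σ)]
  module

lemma gamma_apply (hh : h ≠ 0) (f : (Fin n → ℤ) → Cl n) (m : Fin n → ℤ) :
    Gamma n σ h f m = -(vecCl n h m * Dirac n σ h f m) - Euler n σ h f m := by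
  rw [Gamma, euler_apply hh]
  simp only [Lop, sum_lt_eCl_mul_eCl_mul, vecCl, Dirac]
  abel

end Operators

section Homogeneous

variable {n : ℕ} {σ : Bool} {h : ℝ}

lemma sgn_mul_self (σ : Bool) : sgn σ * sgn σ = 1 := by
  cases σ <;> norm_num [sgn]

lemma mul_factPow_sub_factPow (σ : Bool) (h x : ℝ) (s : ℕ) :
    x * (factPow σ h x s - factPow σ h (x - sgn σ * h) s) = sgn σ * s * h * factPow σ h x s := by
  cases s with
  | zero => simp [factPow]
  | succ s =>
    have hx : factPow σ h x (s + 1) = (∏ k ∈ range s, (x - sgn σ * (k + 1) * h)) * x := by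
      simp [factPow, Finset.prod_range_succ']
    have hx' : factPow σ h (x - sgn σ * h) (s + 1)
        = (∏ k ∈ range s, (x - sgn σ * (k + 1) * h)) * (x - sgn σ * (s + 1) * h) := by
      rw [factPow, Finset.prod_range_succ]
      congr 1
      · exact Finset.prod_congr rfl fun k _ => by ring
      · ring
    rw [hx, hx']
    push_cast
    ring

lemma mfp_eq_mul_prod_erase (m : Fin n → ℤ) (α : Fin n → ℕ) (i : Fin n) :
    mfp σ h m α = factPow σ h ((m i : ℝ) * h) (α i) *
      ∏ j ∈ univ.erase i, factPow σ h ((m j : ℝ) * h) (α j) :=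
  (Finset.mul_prod_erase univ _ (mem_univ i)).symm

lemma mfp_shiftB (m : Fin n → ℤ) (α : Fin n → ℕ) (i : Fin n) :
    mfp σ h (shiftB σ i m) α = factPow σ h ((m i : ℝ) * h - sgn σ * h) (α i) *
      ∏ j ∈ univ.erase i, factPow σ h ((m j : ℝ) * h) (α j) := by
  rw [mfp_eq_mul_prod_erase _ _ i]
  congr 1
  · cases σ <;> simp [shiftB, sgn, add_mul, sub_mul]
  · refine Finset.prod_congr rfl fun j hj => ?_
    have hji : j ≠ i := (Finset.mem_erase.mp hj).1
    cases σ <;> simp [shiftB, Pi.single_eq_of_ne hji]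

lemma smul_fdiff_mfp_smul_shiftB (hh : h ≠ 0) (α : Fin n → ℕ) (a : Cl n) (i : Fin n)
    (m : Fin n → ℤ) :
    ((m i : ℝ) * h) • fdiff σ h i (fun m' => mfp σ h m' α • a) (shiftB σ i m)
      = (α i : ℝ) • (mfp σ h m α • a) := by
  rw [fdiff_shiftB, ← sub_smul, smul_smul, smul_smul, smul_smul, mfp_shiftB,
    mfp_eq_mul_prod_erase _ _ i]
  set P := factPow σ h ((m i : ℝ) * h) (α i)
  set R := ∏ j ∈ univ.erase i, factPow σ h ((m j : ℝ) * h) (α j)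
  congr 1
  linear_combination (sgn σ * h⁻¹ * R) * mul_factPow_sub_factPow σ h ((m i : ℝ) * h) (α i)
    + (α i * P * R * h * h⁻¹) * sgn_mul_self σ + (α i * P * R) * inv_mul_cancel₀ hh

def eulerLinearMap (n : ℕ) (σ : Bool) (h : ℝ) : Module.End ℝ ((Fin n → ℤ) → Cl n) where
  toFun := Euler n σ h
  map_add' f g := by
    funext m
    simp only [Euler, fdiff_add, Pi.add_apply, smul_add, Finset.sum_add_distrib]
  map_smul' c f := by
    funext m
    simp only [Euler, fdiff_smul, Pi.smul_apply, Finset.smul_sum, smul_comm c, RingHom.id_apply]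

lemma euler_mfp_smul (hh : h ≠ 0) (α : Fin n → ℕ) (a : Cl n) :
    Euler n σ h (fun m => mfp σ h m α • a)
      = ((∑ i, α i : ℕ) : ℝ) • fun m => mfp σ h m α • a := by
  funext m
  simp only [Euler, smul_fdiff_mfp_smul_shiftB hh, Pi.smul_apply, Nat.cast_sum, Finset.sum_smul]

lemma euler_eq_smul_of_mem_PiEq (hh : h ≠ 0) {k : ℕ} {M : (Fin n → ℤ) → Cl n}
    (hM : M ∈ PiEq n σ h k) : Euler n σ h M = (k : ℝ) • M := by
  have hle : PiEq n σ h k ≤ (eulerLinearMap n σ h).eigenspace k := by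
    refine Submodule.span_le.2 ?_
    rintro _ ⟨α, a, rfl, rfl⟩
    exact Module.End.mem_eigenspace_iff.2 (euler_mfp_smul hh α a)
  exact Module.End.mem_eigenspace_iff.1 (hle hM)

end Homogeneous

theorem gamma_on_monogenic_general (n : ℕ) (h : ℝ) (hh : 0 < h) (σ : Bool)
    (k : ℕ) (M : (Fin n → ℤ) → Cl n) (hM : M ∈ PiEq n σ h k)
    (hmono : Dirac n σ h M = 0) :
    Gamma n σ h M = (-(k : ℝ)) • M := by
  funext m
  rw [gamma_apply hh.ne', hmono, euler_eq_smul_of_mem_PiEq hh.ne' hM]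
  simp

/-- For a discrete monogenic homogeneous polynomial `M` of degree `k`, `Γ_h^± M = −k M`. -/
theorem gamma_on_monogenic (n : ℕ) (hn : 1 ≤ n) (h : ℝ) (hh : 0 < h) (σ : Bool)
    (k : ℕ) (M : (Fin n → ℤ) → Cl n) (hM : M ∈ PiEq n σ h k)
    (hmono : Dirac n σ h M = 0) :
    Gamma n σ h M = (-(k : ℝ)) • M :=
  gamma_on_monogenic_general n h hh σ k M hM hmono
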